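/- arXiv:alg-geom/9710025 — 4 statements merged into one kernel-verified Lean document; each statement's English description precedes it below -/
import Mathlib

section
/- For a binary linear [n,k,d] code (a k-dimensional linear subspace C of F_2^n in which every nonzero word has Hamming weight at least d), one has n ≥ Σ_{i=0}^{k-1} ⌈d/2^i⌉ (the Griesmer bound). -/
/-!
Take a nonzero codeword `c` of minimum weight `w ≥ d` and puncture the code on the support of `c`.
For a codeword `x ≠ c`, the coordinatewise identity `2 |x off supp c| + |c| = |x| + |x + c|` together
with `|c| ≤ |x + c|` gives `|x| ≤ 2 |x off supp c|`. Hence only `0` and `c` die under puncturing, so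
the punctured code has length `n - w`, dimension `k - 1` and minimum weight at least `d / 2`.
Induction on `k`, with `d` in an ordered field so that it can be halved, gives `n - w ≥ ∑_{1 ≤ i < k} ⌈d / 2^i⌉`.
-/

open Finset Module

section Weight

variable {ι β : Type*} [Fintype ι] [Zero β] [DecidableEq β]

theorem hammingNorm_comp_subtype_val (p : ι → Prop) [DecidablePred p] (x : ι → β) :
    hammingNorm (x ∘ Subtype.val : Subtype p → β) = #{i | p i ∧ x i ≠ 0} := by
  rw [hammingNorm, ← Fintype.card_subtype, ← Fintype.card_subtype]
  exact Fintype.card_congr (Equiv.subtypeSubtypeEquivSubtypeInter p (x · ≠ 0))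

theorem card_subtype_eq_zero_add_hammingNorm (c : ι → β) :
    Fintype.card {i // c i = 0} + hammingNorm c = Fintype.card ι := by
  rw [Fintype.card_subtype, hammingNorm]
  exact card_filter_add_card_filter_not _

theorem two_mul_hammingNorm_comp_subtype_val_add_hammingNorm (x c : ι → ZMod 2) :
    2 * hammingNorm (x ∘ Subtype.val : {i // c i = 0} → ZMod 2) + hammingNorm c =
      hammingNorm x + hammingNorm (x + c) := by
  have key : ∀ a b : ZMod 2, 2 * (if b = 0 ∧ a ≠ 0 then 1 else 0) + (if b ≠ 0 then 1 else 0) =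
      (if a ≠ 0 then 1 else 0) + (if a + b ≠ 0 then 1 else 0) := by decide
  rw [hammingNorm_comp_subtype_val]
  simp only [hammingNorm, card_filter, mul_sum, ← sum_add_distrib, Pi.add_apply]
  exact sum_congr rfl fun i _ => key (x i) (c i)

end Weight

def residualCode {K ι : Type*} [Field K] (C : Submodule K (ι → K)) (c : ι → K) :
    Submodule K ({i // c i = 0} → K) :=
  C.map (LinearMap.funLeft K K Subtype.val)

section MinimumWeight

variable {ι : Type*} [Fintype ι] {C : Submodule (ZMod 2) (ι → ZMod 2)} {c : ι → ZMod 2}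

theorem exists_mem_ne_zero_forall_hammingNorm_le (hC : C ≠ ⊥) :
    ∃ c ∈ C, c ≠ 0 ∧ ∀ x ∈ C, x ≠ 0 → hammingNorm c ≤ hammingNorm x := by
  obtain ⟨c, ⟨hc, hc0⟩, hmin⟩ := Set.exists_min_image {x | x ∈ C ∧ x ≠ 0} hammingNorm
    (Set.toFinite _) (Submodule.exists_mem_ne_zero_of_ne_bot hC)
  exact ⟨c, hc, hc0, fun x hx hx0 => hmin x ⟨hx, hx0⟩⟩

theorem hammingNorm_le_two_mul_hammingNorm_comp_subtype_val (hc : c ∈ C)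
    (hmin : ∀ x ∈ C, x ≠ 0 → hammingNorm c ≤ hammingNorm x) {x : ι → ZMod 2} (hx : x ∈ C)
    (hxc : x ≠ c) :
    hammingNorm x ≤ 2 * hammingNorm (x ∘ Subtype.val : {i // c i = 0} → ZMod 2) := by
  have hxc0 : x + c ≠ 0 := by rwa [← ZModModule.sub_eq_add, sub_ne_zero]
  have := hmin (x + c) (C.add_mem hx hc) hxc0
  have := two_mul_hammingNorm_comp_subtype_val_add_hammingNorm x c
  omega

theorem ker_funLeft_domRestrict_eq_span (hc : c ∈ C)
    (hmin : ∀ x ∈ C, x ≠ 0 → hammingNorm c ≤ hammingNorm x) :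
    LinearMap.ker ((LinearMap.funLeft (ZMod 2) (ZMod 2)
      (Subtype.val : {i // c i = 0} → ι)).domRestrict C) = (ZMod 2) ∙ ⟨c, hc⟩ := by
  refine le_antisymm (fun x hx => ?_) ?_
  · by_cases hxc : (x : ι → ZMod 2) = c
    · exact (Subtype.ext hxc : x = ⟨c, hc⟩) ▸ Submodule.mem_span_singleton_self _
    · have := hammingNorm_le_two_mul_hammingNorm_comp_subtype_val hc hmin x.2 hxc
      have hx0 : (x : ι → ZMod 2) ∘ Subtype.val = 0 := LinearMap.mem_ker.mp hx
      rw [hx0, hammingNorm_zero, mul_zero, Nat.le_zero, hammingNorm_eq_zero] at this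
      exact (Subtype.ext this : x = 0) ▸ zero_mem _
  · rw [Submodule.span_singleton_le_iff_mem]
    exact LinearMap.mem_ker.mpr (funext fun j => j.2)

theorem finrank_residualCode_add_one (hc : c ∈ C) (hc0 : c ≠ 0)
    (hmin : ∀ x ∈ C, x ≠ 0 → hammingNorm c ≤ hammingNorm x) :
    finrank (ZMod 2) (residualCode C c) + 1 = finrank (ZMod 2) C := by
  have hc0' : (⟨c, hc⟩ : C) ≠ 0 := fun h => hc0 (congrArg Subtype.val h)
  rw [residualCode, ← LinearMap.range_domRestrict, ← finrank_span_singleton (K := ZMod 2) hc0',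
    ← ker_funLeft_domRestrict_eq_span hc hmin]
  exact LinearMap.finrank_range_add_finrank_ker _

theorem div_two_le_hammingNorm_of_mem_residualCode {α : Type*} [Field α] [LinearOrder α]
    [IsStrictOrderedRing α] {d : α} (hc : c ∈ C)
    (hmin : ∀ x ∈ C, x ≠ 0 → hammingNorm c ≤ hammingNorm x)
    (hd : ∀ x ∈ C, x ≠ 0 → d ≤ hammingNorm x) {y : {i // c i = 0} → ZMod 2}
    (hy : y ∈ residualCode C c) (hy0 : y ≠ 0) : d / 2 ≤ hammingNorm y := by
  obtain ⟨x, hx, rfl⟩ := hy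
  have hxc : x ≠ c := by rintro rfl; exact hy0 (funext fun j => j.2)
  have hx0 : x ≠ 0 := by rintro rfl; exact hy0 (map_zero _)
  have hweight := hammingNorm_le_two_mul_hammingNorm_comp_subtype_val hc hmin hx hxc
  rw [div_le_iff₀ two_pos]
  calc d ≤ hammingNorm x := hd x hx hx0
    _ ≤ _ := by rw [mul_comm]; exact_mod_cast hweight

end MinimumWeight

theorem sum_ceil_div_two_pow_le_card {α : Type*} [Field α] [LinearOrder α]
    [IsStrictOrderedRing α] [FloorRing α] {ι : Type*} [Fintype ι]
    (C : Submodule (ZMod 2) (ι → ZMod 2)) (d : α) (hd : ∀ x ∈ C, x ≠ 0 → d ≤ hammingNorm x) :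
    ∑ i ∈ range (finrank (ZMod 2) C), ⌈d / 2 ^ i⌉ ≤ Fintype.card ι := by
  induction hk : finrank (ZMod 2) C generalizing ι C d with
  | zero => simp
  | succ k ih =>
    obtain ⟨c, hc, hc0, hmin⟩ :=
      exists_mem_ne_zero_forall_hammingNorm_le (C := C) (by rintro rfl; simp at hk)
    have hres := ih (residualCode C c) (d / 2)
      (fun _ => div_two_le_hammingNorm_of_mem_residualCode hc hmin hd)
      (by have := finrank_residualCode_add_one hc hc0 hmin; omega)
    simp only [div_div, ← pow_succ'] at hres
    have hdc : ⌈d⌉ ≤ hammingNorm c := Int.ceil_le.mpr (by exact_mod_cast hd c hc hc0)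
    have hcard := card_subtype_eq_zero_add_hammingNorm c
    rw [sum_range_succ', pow_zero, div_one, ← hcard]
    push_cast
    linarith

/-- Griesmer bound for binary linear [n,k,d] codes. -/
theorem griesmer_bound (n k d : ℕ) (C : Submodule (ZMod 2) (Fin n → ZMod 2))
    (hk : Module.finrank (ZMod 2) C = k)
    (hd : ∀ w ∈ C, w ≠ 0 → d ≤ hammingNorm w) :
    ∑ i ∈ Finset.range k, ⌈(d : ℚ) / 2 ^ i⌉ ≤ (n : ℤ) := by
  simpa [hk] using sum_ceil_div_two_pow_le_card C (d : ℚ) fun w hw hw0 => by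
    exact_mod_cast hd w hw hw0
end

section
/- Let C ⊆ F_2^n be a binary linear code and d ∈ ℕ such that 2d divides the Hamming weight of every word of C. Then for any fixed w ∈ C, the projection C_w of C onto the support of w (replacing each v ∈ C by its coordinatewise product v ∩ w) has the property that d divides the weight of every element of C_w. -/
/-!
Weights of `v`, `w` and `v + w` are all divisible by `2d`, and the identity
`|v + w| + 2 |v ∩ w| = |v| + |w|` then forces `2d ∣ 2 |v ∩ w|`.
-/

lemma hammingNorm_add_add_two_mul_hammingNorm_mul {ι : Type*} [Fintype ι]
    (v w : ι → ZMod 2) :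
    hammingNorm (v + w) + 2 * hammingNorm (v * w) = hammingNorm v + hammingNorm w := by
  have coordinate : ∀ a b : ZMod 2,
      ((if a + b ≠ 0 then 1 else 0) + 2 * (if a * b ≠ 0 then 1 else 0) : ℕ)
        = (if a ≠ 0 then 1 else 0) + (if b ≠ 0 then 1 else 0) := by decide
  simp only [hammingNorm, Finset.card_filter, Pi.add_apply, Pi.mul_apply]
  rw [Finset.mul_sum, ← Finset.sum_add_distrib, ← Finset.sum_add_distrib]
  exact Finset.sum_congr rfl fun i _ => coordinate (v i) (w i)

/-- If 2d divides the weight of every word of C, then d divides the weight of every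
element of the projection of C onto the support of a fixed word w ∈ C. -/
theorem proj_support_weight_div (n d : ℕ) (C : Submodule (ZMod 2) (Fin n → ZMod 2))
    (hC : ∀ v ∈ C, 2 * d ∣ hammingNorm v)
    (w : Fin n → ZMod 2) (hw : w ∈ C) :
    ∀ v ∈ C, d ∣ hammingNorm (fun i => v i * w i) := by
  intro v hv
  have hsum : 2 * d ∣ hammingNorm (v + w) + 2 * hammingNorm (v * w) := by
    rw [hammingNorm_add_add_two_mul_hammingNorm_mul]
    exact dvd_add (hC v hv) (hC w hw)
  have htwice : 2 * d ∣ 2 * hammingNorm (v * w) :=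
    (Nat.dvd_add_right (hC _ (C.add_mem hv hw))).mp hsum
  exact Nat.dvd_of_mul_dvd_mul_left two_pos htwice
end

section
/- A binary linear [31, 5, 16] code has exactly 31 words of weight 16 and no word of weight strictly greater than 16. -/
/-!
Plotkin's averaging argument. In a binary linear code every coordinate is either zero on the
whole code or, via translation by a codeword that is nonzero there, nonzero on exactly half of it.
Counting nonzero entries column by column, the 32 codewords have total weight at most
31 · 32 / 2 = 31 · 16. The 31 nonzero codewords each weigh at least 16, so each weighs exactly 16.
-/

open Finset

theorem sum_hammingNorm_eq_sum_card_filter {α ι β : Type*} [Fintype ι] [Zero β] [DecidableEq β]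
    (s : Finset α) (f : α → ι → β) :
    ∑ a ∈ s, hammingNorm (f a) = ∑ i, #{a ∈ s | f a i ≠ 0} := by
  simp only [hammingNorm, card_filter]
  exact sum_comm

section BinaryCode

variable {ι : Type*} (C : Submodule (ZMod 2) (ι → ZMod 2)) [Fintype C]

theorem two_mul_card_coord_ne_zero_le (i : ι) :
    2 * #{w : C | (w : ι → ZMod 2) i ≠ 0} ≤ Fintype.card C := by
  classical
  set A : Finset C := {w : C | (w : ι → ZMod 2) i ≠ 0}
  rcases A.eq_empty_or_nonempty with hA | ⟨w₀, hw₀⟩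
  · simp [hA]
  have eq_one : ∀ x : ZMod 2, x ≠ 0 → x = 1 := by decide
  have hmaps : Set.MapsTo (· + w₀) (A : Set C) (Aᶜ : Finset C) := by
    intro w hw
    simp only [ne_eq, coe_filter, mem_univ, true_and, Set.mem_ofPred_eq, mem_filter, compl_filter,
      Decidable.not_not, Submodule.coe_add, Pi.add_apply, A] at hw hw₀ ⊢
    rw [eq_one _ hw, eq_one _ hw₀]
    rfl
  have hle : #A ≤ #Aᶜ := card_le_card_of_injOn _ hmaps (add_left_injective w₀).injOn
  have hsplit := card_add_card_compl A
  omega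

theorem two_mul_sum_hammingNorm_le [Fintype ι] :
    2 * ∑ w : C, hammingNorm (w : ι → ZMod 2) ≤ Fintype.card ι * Fintype.card C :=
  calc 2 * ∑ w : C, hammingNorm (w : ι → ZMod 2)
      = ∑ i, 2 * #{w : C | (w : ι → ZMod 2) i ≠ 0} := by
        rw [sum_hammingNorm_eq_sum_card_filter, mul_sum]
    _ ≤ ∑ _i : ι, Fintype.card C := sum_le_sum fun i _ => two_mul_card_coord_ne_zero_le C i
    _ = Fintype.card ι * Fintype.card C := by simp

theorem hammingNorm_eq_of_plotkin_bound_tight [Fintype ι] (d : ℕ)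
    (hd : ∀ w ∈ C, w ≠ 0 → d ≤ hammingNorm w)
    (htight : Fintype.card ι * Fintype.card C ≤ 2 * d * (Fintype.card C - 1))
    {w : ι → ZMod 2} (hw : w ∈ C) (hw0 : w ≠ 0) : hammingNorm w = d := by
  classical
  set s : Finset C := univ.erase 0
  have hlow : ∀ v ∈ s, d ≤ hammingNorm (v : ι → ZMod 2) := fun v hv =>
    hd v v.2 (by simpa [s] using hv)
  have hup : ∑ v ∈ s, hammingNorm (v : ι → ZMod 2) ≤ ∑ _v ∈ s, d := by
    have hsum := two_mul_sum_hammingNorm_le C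
    rw [← sum_erase univ (a := 0) (by simp)] at hsum
    rw [sum_const, smul_eq_mul, card_erase_of_mem (mem_univ _), card_univ]
    nlinarith
  have hall := (sum_eq_sum_iff_of_le hlow).1 (le_antisymm (sum_le_sum hlow) hup)
  exact (hall ⟨w, hw⟩ (by simpa [s] using hw0)).symm

end BinaryCode

/-- A binary linear [31,5,16] code has exactly 31 words of weight 16 and no word of
weight strictly greater than 16. -/
theorem code_31_5_16_weights (C : Submodule (ZMod 2) (Fin 31 → ZMod 2))
    (hk : Module.finrank (ZMod 2) C = 5)
    (hd : ∀ w ∈ C, w ≠ 0 → 16 ≤ hammingNorm w) :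
    {w : Fin 31 → ZMod 2 | w ∈ C ∧ hammingNorm w = 16}.ncard = 31 ∧
      ∀ w ∈ C, hammingNorm w ≤ 16 := by
  classical
  have hcard : Fintype.card C = 32 := by
    rw [Module.card_eq_pow_finrank (K := ZMod 2), hk, ZMod.card]
    rfl
  have hwt : ∀ w ∈ C, w ≠ 0 → hammingNorm w = 16 := fun w hw hw0 =>
    hammingNorm_eq_of_plotkin_bound_tight C 16 hd (by simp [hcard]) hw hw0
  have hset : {w : Fin 31 → ZMod 2 | w ∈ C ∧ hammingNorm w = 16} = (C : Set _) \ {0} := by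
    ext w
    constructor
    · rintro ⟨hw, h16⟩
      exact ⟨hw, by rintro rfl; simp at h16⟩
    · rintro ⟨hw, hw0⟩
      exact ⟨hw, hwt w hw hw0⟩
  refine ⟨?_, fun w hw => ?_⟩
  · rw [hset, Set.ncard_sdiff_singleton_of_mem C.zero_mem, ← Nat.card_coe_set_eq,
      SetLike.coe_sort_coe, Nat.card_eq_fintype_card, hcard]
  · rcases eq_or_ne w 0 with rfl | hw0
    · simp
    · exact (hwt w hw hw0).le
end

section
/- Let C ⊆ F_2^65 be a binary linear code of dimension k ≥ 12 such that every nonzero word has weight in {24, 32, 40}. Then k = 12. -/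
/-!
If `C` has a word `w` of weight 24, restricting to the support of `w` is injective on `C`: a nonzero
codeword disjoint from `w` would add to `w` to give a codeword of weight at least 48. All weights of
`C` are divisible by 8, so the image is a doubly even, hence self-orthogonal, code of length 24,
and its dimension is at most 12.

Otherwise every nonzero weight is 32 or 40. Over the `N` codewords, with `s` nonzero coordinates,
`2 ∑ wt = s N` and `4 ∑ wt² ≥ (s² + s) N`, while `∑ (wt - 32) (wt - 40) = 1280` since only the
zero word contributes. Together these force `N ≤ 102`, i.e. `dim C ≤ 6`.
-/

open Finset Module Matrix

theorem hammingNorm_add_add_two_mul_card {ι : Type*} [Fintype ι] (u v : ι → ZMod 2) :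
    hammingNorm (u + v) + 2 * #{i | u i ≠ 0 ∧ v i ≠ 0} = hammingNorm u + hammingNorm v := by
  simp only [hammingNorm, card_filter, mul_sum, ← sum_add_distrib]
  refine sum_congr rfl fun i _ => ?_
  have key : ∀ a b : ZMod 2, ((if a + b ≠ 0 then 1 else 0) + 2 * if a ≠ 0 ∧ b ≠ 0 then 1 else 0) =
      (if a ≠ 0 then 1 else 0) + if b ≠ 0 then 1 else 0 := by decide
  exact key (u i) (v i)

theorem two_mul_finrank_le_card_of_dotProduct_eq_zero {K ι : Type*} [Field K] [Fintype ι]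
    (D : Submodule K (ι → K)) (hD : ∀ x ∈ D, ∀ y ∈ D, x ⬝ᵥ y = 0) :
    2 * finrank K D ≤ Fintype.card ι := by
  classical
  set Φ := D.map (dotProductEquiv K ι).toLinearMap
  have hle : D ≤ Φ.dualCoannihilator := by
    intro y hy
    rw [Submodule.mem_dualCoannihilator]
    rintro _ ⟨x, hx, rfl⟩
    exact hD x hx y hy
  have hsum := Subspace.finrank_add_finrank_dualCoannihilator_eq Φ
  rw [LinearEquiv.finrank_map_eq, finrank_fintype_fun_eq_card] at hsum
  have := Submodule.finrank_mono hle
  omega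

theorem dotProduct_eq_zero_of_four_dvd_hammingNorm {ι : Type*} [Fintype ι] {x y : ι → ZMod 2}
    (hx : 4 ∣ hammingNorm x) (hy : 4 ∣ hammingNorm y) (hxy : 4 ∣ hammingNorm (x + y)) :
    x ⬝ᵥ y = 0 := by
  have hcount : x ⬝ᵥ y = (#{i | x i ≠ 0 ∧ y i ≠ 0} : ZMod 2) := by
    rw [card_filter, Nat.cast_sum, dotProduct]
    refine sum_congr rfl fun i _ => ?_
    generalize x i = a; generalize y i = b
    revert a b; decide
  have := hammingNorm_add_add_two_mul_card x y
  rw [hcount, ZMod.natCast_eq_zero_iff]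
  omega

section Moments

variable {ι M : Type*} [Fintype ι] [AddCommGroup M] [Module (ZMod 2) M] [Fintype M]

theorem two_mul_hammingNorm_eq_card {g : Dual (ZMod 2) M} (hg : g ≠ 0) :
    2 * hammingNorm ⇑g = Fintype.card M := by
  obtain ⟨m, hm⟩ : ∃ m, g m ≠ 0 := by
    by_contra! h; exact hg (LinearMap.ext h)
  have hfiber : #{x | g x = 0} = #{x | g x ≠ 0} := by
    rw [AddMonoidHom.card_fiber_eq_of_mem_range g (y := 1) ⟨0, map_zero g⟩
      ⟨m, Fin.eq_one_of_ne_zero _ hm⟩]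
    exact congrArg card <| filter_congr fun x _ =>
      ⟨fun h => h ▸ one_ne_zero, Fin.eq_one_of_ne_zero _⟩
  have hsplit := card_filter_add_card_filter_not (s := univ) (fun x => g x = 0)
  rw [card_univ] at hsplit
  rw [hammingNorm, two_mul]
  nth_rewrite 1 [← hfiber]
  convert hsplit using 3

theorem card_le_four_mul_card_filter_ne_zero_and {g h : Dual (ZMod 2) M} (hg : g ≠ 0)
    (hh : h ≠ 0) : Fintype.card M ≤ 4 * #{x | g x ≠ 0 ∧ h x ≠ 0} := by
  have hsum := hammingNorm_add_add_two_mul_card ⇑g ⇑h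
  have hgh : 2 * hammingNorm (⇑g + ⇑h) ≤ Fintype.card M := by
    change 2 * hammingNorm ⇑(g + h) ≤ _
    by_cases h0 : g + h = 0
    · rw [h0, show ⇑(0 : Dual (ZMod 2) M) = 0 from rfl, hammingNorm_zero]; omega
    · exact (two_mul_hammingNorm_eq_card h0).le
  have := two_mul_hammingNorm_eq_card hg
  have := two_mul_hammingNorm_eq_card hh
  omega

variable (f : ι → Dual (ZMod 2) M)

theorem two_mul_sum_hammingNorm_eq :
    2 * ∑ m, hammingNorm (fun i => f i m) = #{i | f i ≠ 0} * Fintype.card M := by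
  have hswap : ∑ m, hammingNorm (fun i => f i m) = ∑ i, hammingNorm ⇑(f i) := by
    simp only [hammingNorm, card_filter]
    exact sum_comm
  rw [hswap, mul_sum, card_filter, sum_mul]
  refine sum_congr rfl fun i _ => ?_
  split_ifs with hi
  · rw [one_mul, two_mul_hammingNorm_eq_card hi]
  · simp [not_not.1 hi]

theorem le_four_mul_sum_hammingNorm_sq :
    (#{i | f i ≠ 0} ^ 2 + #{i | f i ≠ 0}) * Fintype.card M ≤
      4 * ∑ m, hammingNorm (fun i => f i m) ^ 2 := by
  classical
  set T : Finset ι := {i | f i ≠ 0} with hT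
  set N := Fintype.card M
  have hexpand : ∑ m, hammingNorm (fun i => f i m) ^ 2 =
      ∑ i, ∑ j, #{m | f i m ≠ 0 ∧ f j m ≠ 0} := by
    simp only [hammingNorm, card_filter, sq, sum_mul_sum, ite_zero_mul_ite_zero, mul_one]
    rw [sum_comm]
    exact sum_congr rfl fun i _ => sum_comm
  have hpair : ∀ i ∈ T, ∀ j ∈ T,
      N + (if i = j then N else 0) ≤ 4 * #{m | f i m ≠ 0 ∧ f j m ≠ 0} := by
    intro i hi j hj
    simp only [hT, mem_filter, mem_univ, true_and] at hi hj
    split_ifs with hij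
    · subst hij
      simp only [and_self]
      have := two_mul_hammingNorm_eq_card hi
      rw [hammingNorm] at this
      omega
    · simpa using card_le_four_mul_card_filter_ne_zero_and hi hj
  calc (#T ^ 2 + #T) * N = ∑ i ∈ T, ∑ j ∈ T, (N + if i = j then N else 0) := by
        simp only [sum_add_distrib, sum_const, smul_eq_mul, sum_ite_eq, sum_ite_mem, inter_self]
        ring
    _ ≤ ∑ i ∈ T, ∑ j ∈ T, 4 * #{m | f i m ≠ 0 ∧ f j m ≠ 0} :=
        sum_le_sum fun i hi => sum_le_sum fun j hj => hpair i hi j hj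
    _ ≤ ∑ i, ∑ j, 4 * #{m | f i m ≠ 0 ∧ f j m ≠ 0} :=
        (sum_le_sum fun i _ => sum_le_sum_of_subset (subset_univ T)).trans
          (sum_le_sum_of_subset (subset_univ T))
    _ = 4 * ∑ m, hammingNorm (fun i => f i m) ^ 2 := by
        rw [hexpand, mul_sum]
        simp only [mul_sum]

theorem card_mul_le_of_hammingNorm_eq_or_eq {a b : ℕ}
    (hw : ∀ m ≠ 0, hammingNorm (fun i => f i m) = a ∨ hammingNorm (fun i => f i m) = b) :
    ((#{i | f i ≠ 0} : ℤ) ^ 2 + #{i | f i ≠ 0} - 2 * (a + b) * #{i | f i ≠ 0} + 4 * a * b) *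
      Fintype.card M ≤ 4 * a * b := by
  have hvanish : ∑ m, ((hammingNorm (fun i => f i m) : ℤ) - a) *
      (hammingNorm (fun i => f i m) - b) = a * b := by
    rw [sum_eq_single 0]
    · simp [← Pi.zero_def]
    · intro m _ hm
      rcases hw m hm with h | h <;> simp [h]
    · simp
  have hexpand : ∑ m, ((hammingNorm (fun i => f i m) : ℤ) - a) *
      (hammingNorm (fun i => f i m) - b) = ∑ m, (hammingNorm (fun i => f i m) : ℤ) ^ 2 -
        (a + b) * ∑ m, (hammingNorm (fun i => f i m) : ℤ) + a * b * Fintype.card M := by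
    have hcard : (Fintype.card M : ℤ) = ∑ _m : M, 1 := by simp
    rw [hcard, mul_sum, mul_sum, ← sum_sub_distrib, ← sum_add_distrib]
    exact sum_congr rfl fun m _ => by ring
  have h1 := two_mul_sum_hammingNorm_eq f
  have h2 := le_four_mul_sum_hammingNorm_sq f
  zify at h1 h2
  linear_combination h2 - 4 * (hvanish.symm.trans hexpand) + 2 * (a + b) * h1

end Moments

theorem finrank_le_six_of_hammingNorm_eq_32_or_40 (C : Submodule (ZMod 2) (Fin 65 → ZMod 2))
    (hw : ∀ w ∈ C, w ≠ 0 → hammingNorm w = 32 ∨ hammingNorm w = 40) :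
    finrank (ZMod 2) C ≤ 6 := by
  have := Fintype.ofFinite C
  let f : Fin 65 → Dual (ZMod 2) C := fun i => (LinearMap.proj i).comp C.subtype
  have hs : #{i | f i ≠ 0} ≤ 65 := (card_filter_le _ _).trans_eq (card_fin 65)
  have hbound := card_mul_le_of_hammingNorm_eq_or_eq f
    (fun c hc => hw c c.2 (by simpa using hc))
  have hN : Fintype.card C = 2 ^ finrank (ZMod 2) C := by
    rw [Fintype.card_eq_nat_card, Module.natCard_eq_pow_finrank (K := ZMod 2), Nat.card_zmod]
  by_contra! hk
  have : 2 ^ 7 ≤ Fintype.card C := hN ▸ Nat.pow_le_pow_right two_pos hk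
  set s := #{i | f i ≠ 0}
  zify at hs this
  push_cast at hbound
  -- `s² - 143 s + 5120 = (65 - s) (78 - s) + 50`
  have : 0 ≤ (65 - (s : ℤ)) * (78 - s) * Fintype.card C := by
    have : (s : ℤ) ≤ 78 := by linarith
    positivity
  nlinarith

theorem hammingNorm_comp_subtype_val_s9 {ι : Type*} [Fintype ι] (u w : ι → ZMod 2) :
    hammingNorm (fun j : {i // w i ≠ 0} => u j) = #{i | u i ≠ 0 ∧ w i ≠ 0} := by
  rw [hammingNorm, ← Fintype.card_subtype, ← Fintype.card_subtype]
  simp only [and_comm (a := u _ ≠ 0)]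
  exact Fintype.card_congr (Equiv.subtypeSubtypeEquivSubtypeInter (w · ≠ 0) (u · ≠ 0))

theorem two_mul_finrank_le_hammingNorm {ι : Type*} [Fintype ι]
    (C : Submodule (ZMod 2) (ι → ZMod 2)) (h8 : ∀ u ∈ C, 8 ∣ hammingNorm u)
    {w : ι → ZMod 2} (hwC : w ∈ C) (hmin : ∀ u ∈ C, u ≠ 0 → hammingNorm w ≤ hammingNorm u)
    (hmax : ∀ u ∈ C, hammingNorm u < 2 * hammingNorm w) :
    2 * finrank (ZMod 2) C ≤ hammingNorm w := by
  let π := LinearMap.funLeft (ZMod 2) (ZMod 2) (Subtype.val : {i // w i ≠ 0} → ι)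
  have hπ (u : ι → ZMod 2) : hammingNorm (π u) = #{i | u i ≠ 0 ∧ w i ≠ 0} :=
    hammingNorm_comp_subtype_val_s9 u w
  have hinj : Function.Injective (π.domRestrict C) := by
    rw [← LinearMap.ker_eq_bot, LinearMap.ker_eq_bot']
    rintro ⟨u, huC⟩ hu
    by_contra hne
    have hu0 : u ≠ 0 := fun h => hne (by simp [h])
    have hdisj : #{i | u i ≠ 0 ∧ w i ≠ 0} = 0 := by
      rw [← hπ, hammingNorm_eq_zero]
      exact hu
    have := hammingNorm_add_add_two_mul_card u w
    have := hmin u huC hu0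
    have := hmax (u + w) (C.add_mem huC hwC)
    omega
  have hrank : finrank (ZMod 2) (C.map π) = finrank (ZMod 2) C := by
    rw [← LinearMap.range_domRestrict]
    exact LinearMap.finrank_range_of_inj hinj
  have h4 : ∀ x ∈ C.map π, 4 ∣ hammingNorm x := by
    rintro _ ⟨u, hu, rfl⟩
    have := hammingNorm_add_add_two_mul_card u w
    have := h8 u hu
    have := h8 w hwC
    have := h8 (u + w) (C.add_mem hu hwC)
    rw [hπ]
    omega
  have := two_mul_finrank_le_card_of_dotProduct_eq_zero (C.map π) fun x hx y hy =>
    dotProduct_eq_zero_of_four_dvd_hammingNorm (h4 x hx) (h4 y hy) (h4 _ (add_mem hx hy))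
  rwa [hrank, Fintype.card_subtype] at this

/-- A binary linear code of length 65 with all nonzero weights in {24,32,40} and
dimension at least 12 has dimension exactly 12. -/
theorem dim_eq_twelve_of_65 (C : Submodule (ZMod 2) (Fin 65 → ZMod 2))
    (hw : ∀ w ∈ C, w ≠ 0 →
      hammingNorm w = 24 ∨ hammingNorm w = 32 ∨ hammingNorm w = 40)
    (hk : 12 ≤ Module.finrank (ZMod 2) C) :
    Module.finrank (ZMod 2) C = 12 := by
  refine le_antisymm ?_ hk
  obtain ⟨w, hwC, hw24⟩ : ∃ w ∈ C, hammingNorm w = 24 := by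
    by_contra! h
    have := finrank_le_six_of_hammingNorm_eq_32_or_40 C fun u hu hu0 =>
      (hw u hu hu0).resolve_left (h u hu)
    omega
  have hweight (u) (hu : u ∈ C) : hammingNorm u = 0 ∨ hammingNorm u = 24 ∨
      hammingNorm u = 32 ∨ hammingNorm u = 40 := by
    by_cases hu0 : u = 0
    · simp [hu0]
    · exact .inr (hw u hu hu0)
  have := two_mul_finrank_le_hammingNorm C (fun u hu => by have := hweight u hu; omega) hwC
    (fun u hu hu0 => by have := hw u hu hu0; omega) (fun u hu => by have := hweight u hu; omega)
  omega
end
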